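/- Let A and B be square ℕ-matrices with no zero rows. If the one-sided edge shifts (X_A, σ_A) and (X_B, σ_B) are one-sided conjugate, i.e., there is a homeomorphism h : X_A → X_B with h ∘ σ_A = σ_B ∘ h, then A and B are unitally shift equivalent. -/

import Mathlib

open Matrix

/-- `(R,S)` is a shift equivalence of lag `l` from the `n × n` ℕ-matrix `A` to the
`m × m` ℕ-matrix `B`. -/
def IsShiftEquivalence {n m : ℕ} (A : Matrix (Fin n) (Fin n) ℕ) (B : Matrix (Fin m) (Fin m) ℕ)
    (R : Matrix (Fin n) (Fin m) ℕ) (S : Matrix (Fin m) (Fin n) ℕ) (l : ℕ) : Prop :=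
  1 ≤ l ∧ A ^ l = R * S ∧ B ^ l = S * R ∧ A * R = R * B ∧ B * S = S * A

/-- `(R,S)` is a unital shift equivalence of lag `l` from `A` to `B`:
a shift equivalence such that `(Bᵀ)^p Rᵀ 𝟙 = (Bᵀ)^(p+q) 𝟙` for some `p q : ℕ`. -/
def IsUnitalShiftEquivalence {n m : ℕ} (A : Matrix (Fin n) (Fin n) ℕ)
    (B : Matrix (Fin m) (Fin m) ℕ)
    (R : Matrix (Fin n) (Fin m) ℕ) (S : Matrix (Fin m) (Fin n) ℕ) (l : ℕ) : Prop :=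
  IsShiftEquivalence A B R S l ∧
    ∃ p q : ℕ, (Bᵀ ^ p) *ᵥ (Rᵀ *ᵥ fun _ => 1) = (Bᵀ ^ (p + q)) *ᵥ (fun _ => 1)

/-- `A` and `B` are unitally shift equivalent. -/
def UnitallyShiftEquivalent {n m : ℕ} (A : Matrix (Fin n) (Fin n) ℕ)
    (B : Matrix (Fin m) (Fin m) ℕ) : Prop :=
  ∃ (l : ℕ) (R : Matrix (Fin n) (Fin m) ℕ) (S : Matrix (Fin m) (Fin n) ℕ),
    IsUnitalShiftEquivalence A B R S l

/-- `A` and `B` are shift equivalent. -/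
def ShiftEquivalent {n m : ℕ} (A : Matrix (Fin n) (Fin n) ℕ)
    (B : Matrix (Fin m) (Fin m) ℕ) : Prop :=
  ∃ (l : ℕ) (R : Matrix (Fin n) (Fin m) ℕ) (S : Matrix (Fin m) (Fin n) ℕ),
    IsShiftEquivalence A B R S l

/-- The edge set of the graph of `A`: `A i j` edges from vertex `i` to vertex `j`.
The source of an edge `⟨i, j, e⟩` is `i` and its range is `j`. -/
def EdgeType {n : ℕ} (A : Matrix (Fin n) (Fin n) ℕ) : Type :=
  (i : Fin n) × (j : Fin n) × Fin (A i j)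

/-- The edge set carries the discrete topology. -/
instance {n : ℕ} (A : Matrix (Fin n) (Fin n) ℕ) : TopologicalSpace (EdgeType A) := ⊥

/-- The one-sided edge shift space `X_A`, a subspace of the product space `(E¹)^ℕ`. -/
def ShiftSpace {n : ℕ} (A : Matrix (Fin n) (Fin n) ℕ) : Type :=
  { x : ℕ → EdgeType A // ∀ i : ℕ, (x i).2.1 = (x (i + 1)).1 }

instance {n : ℕ} (A : Matrix (Fin n) (Fin n) ℕ) : TopologicalSpace (ShiftSpace A) :=
  instTopologicalSpaceSubtype

/-- The shift map `σ_A : X_A → X_A`. -/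
def shiftMap {n : ℕ} (A : Matrix (Fin n) (Fin n) ℕ) : ShiftSpace A → ShiftSpace A :=
  fun x => ⟨fun i => x.1 (i + 1), fun i => x.2 (i + 1)⟩

/-- `A` has no zero rows. -/
def NoZeroRows {n : ℕ} (A : Matrix (Fin n) (Fin n) ℕ) : Prop :=
  ∀ i, ∃ j, A i j ≠ 0

/-- A point `x` is eventually periodic for `σ` if `σ^p x = σ^q x` for some distinct `p, q`. -/
def EventuallyPeriodic {X : Type*} (σ : X → X) (x : X) : Prop :=
  ∃ p q : ℕ, p ≠ q ∧ σ^[p] x = σ^[q] x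

/-!
By compactness, the conjugacy `h` and its inverse are sliding block codes with some anticipation
`N`: the first `t` edges of `h x` depend only on the first `N + t` edges of `x`. Let `R i j`
count the words of length `N + 1` of `X_B` that end at `j` and whose `h`-preimages start at `i`,
and define `S` in the same way from `h⁻¹`. A word `u` of length `2N + 2` of `X_A` is determined
by the first half of `h u` and the second half of `u`, and every matching pair of such halves
occurs, so `A ^ (2N + 2) = R * S`. A word `w` of length `N + 2` of `X_B` corresponds both to
(the first edge of `h⁻¹ w`, the tail of `w`) and to (the head of `w`, the last edge of `w`), so
`A * R = R * B`. Finally `R` counts all words of length `N + 1` of `X_B` by their last vertex,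
as `B ^ (N + 1)` does, so `R` and `B ^ (N + 1)` have the same column sums: unitality with
`p = 0`.
-/

section Counting

variable {P Q R ι κ μ : Type*}

noncomputable def countMatrix (s : P → ι) (r : P → κ) : Matrix ι κ ℕ :=
  fun i j => Nat.card {p // s p = i ∧ r p = j}

/-- `(f, g)` identifies `R` with the fibre product of `r₁` and `s₂`. -/
theorem countMatrix_mul [Fintype κ] [Finite P] [Finite Q]
    {s₁ : P → ι} {r₁ : P → κ} {s₂ : Q → κ} {r₂ : Q → μ} {s : R → ι} {r : R → μ}
    (f : R → P) (g : R → Q) (hfg : ∀ x, r₁ (f x) = s₂ (g x))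
    (hs : ∀ x, s x = s₁ (f x)) (hr : ∀ x, r x = r₂ (g x))
    (hinj : ∀ x y, f x = f y → g x = g y → x = y)
    (hsurj : ∀ p q, r₁ p = s₂ q → ∃ x, f x = p ∧ g x = q) :
    countMatrix s₁ r₁ * countMatrix s₂ r₂ = countMatrix s r := by
  ext i j
  simp only [countMatrix, Matrix.mul_apply, ← Nat.card_prod]
  rw [← Nat.card_sigma]
  symm
  refine Nat.card_congr (Equiv.ofBijective (fun x => ⟨r₁ (f x.1),
    ⟨f x.1, (hs x.1) ▸ x.2.1, rfl⟩, ⟨g x.1, (hfg x.1).symm, (hr x.1) ▸ x.2.2⟩⟩) ⟨?_, ?_⟩)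
  · intro x y hxy
    exact Subtype.ext (hinj _ _ (congrArg (fun z => z.2.1.1) hxy)
      (congrArg (fun z => z.2.2.1) hxy))
  · rintro ⟨c, ⟨p, hp, rfl⟩, ⟨q, hq, hq'⟩⟩
    obtain ⟨x, rfl, rfl⟩ := hsurj p q hq.symm
    exact ⟨⟨x, (hs x).trans hp, (hr x).trans hq'⟩, rfl⟩

theorem countMatrix_transpose_mulVec_one [Fintype ι] [Finite P] (s : P → ι) (r : P → κ) :
    (countMatrix s r)ᵀ *ᵥ (fun _ => 1) = fun j => Nat.card {p // r p = j} := by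
  funext j
  simp only [Matrix.mulVec, dotProduct, Matrix.transpose_apply, countMatrix, mul_one]
  rw [← Nat.card_sigma]
  exact Nat.card_congr
    { toFun := fun x => ⟨x.2.1, x.2.2.2⟩
      invFun := fun p => ⟨s p.1, p.1, rfl, p.2⟩
      left_inv := by rintro ⟨_, p, rfl, h⟩; rfl
      right_inv := fun _ => rfl }

end Counting

namespace ShiftSpace

variable {k n m : ℕ} {M : Matrix (Fin k) (Fin k) ℕ}
  {A : Matrix (Fin n) (Fin n) ℕ} {B : Matrix (Fin m) (Fin m) ℕ}

instance : DiscreteTopology (EdgeType M) := ⟨rfl⟩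

instance : Finite (EdgeType M) := @Finite.instSigma _ _ _ fun _ => inferInstance

instance : CompactSpace (ShiftSpace M) := by
  have : IsClosed (⋂ i, {x : ℕ → EdgeType M | (x i).2.1 = (x (i + 1)).1}) :=
    isClosed_iInter fun i => isClosed_eq
      ((continuous_of_discreteTopology (f := fun e : EdgeType M => e.2.1)).comp
        (continuous_apply i))
      ((continuous_of_discreteTopology (f := fun e : EdgeType M => e.1)).comp
        (continuous_apply (i + 1)))
  rw [Set.iInter_ofPred] at this
  exact isCompact_iff_compactSpace.mp this.isCompact

def vertex (x : ShiftSpace M) (s : ℕ) : Fin k := (x.1 s).1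

lemma vertex_succ (x : ShiftSpace M) (s : ℕ) : vertex x (s + 1) = (x.1 s).2.1 := (x.2 s).symm

lemma iterate_shiftMap_apply (r : ℕ) (x : ShiftSpace M) (s : ℕ) :
    ((shiftMap M)^[r] x).1 s = x.1 (r + s) := by
  induction r generalizing x with
  | zero => simp
  | succ r ih => rw [Function.iterate_succ_apply, ih]; exact congrArg x.1 (by omega)

lemma vertex_iterate_shiftMap (r : ℕ) (x : ShiftSpace M) (s : ℕ) :
    vertex ((shiftMap M)^[r] x) s = vertex x (r + s) := by
  rw [vertex, iterate_shiftMap_apply, vertex]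

def Agree (t : ℕ) (x y : ShiftSpace M) : Prop := ∀ s < t, x.1 s = y.1 s

lemma Agree.mono {t t' : ℕ} {x y : ShiftSpace M} (h : Agree t x y) (ht : t' ≤ t) :
    Agree t' x y := fun s hs => h s (by omega)

lemma agree_add_iff {a b : ℕ} {x y : ShiftSpace M} :
    Agree (a + b) x y ↔
      Agree a x y ∧ Agree b ((shiftMap M)^[a] x) ((shiftMap M)^[a] y) := by
  simp only [Agree, iterate_shiftMap_apply]
  refine ⟨fun h => ⟨fun s hs => h s (by omega), fun s hs => h (a + s) (by omega)⟩,
    fun ⟨h₁, h₂⟩ s hs => ?_⟩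
  rcases lt_or_ge s a with hsa | hsa
  · exact h₁ s hsa
  · simpa [Nat.add_sub_cancel' hsa] using h₂ (s - a) (by omega)

lemma eq_of_agree_of_iterate_eq {t : ℕ} {x y : ShiftSpace M} (h : Agree t x y)
    (ht : (shiftMap M)^[t] x = (shiftMap M)^[t] y) : x = y := by
  refine Subtype.ext (funext fun s => ?_)
  rcases lt_or_ge s t with hst | hst
  · exact h s hst
  · have := congrArg (fun z : ShiftSpace M => z.1 (s - t)) ht
    simpa [iterate_shiftMap_apply, Nat.add_sub_cancel' hst] using this

def cons (e : EdgeType M) (y : ShiftSpace M) (he : e.2.1 = vertex y 0) : ShiftSpace M :=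
  ⟨fun s => Nat.casesOn s e y.1, by rintro (_ | s); exacts [he, y.2 s]⟩

lemma exists_apply_zero_eq (hM : NoZeroRows M) (e : EdgeType M) :
    ∃ x : ShiftSpace M, x.1 0 = e := by
  choose next hnext using hM
  let step (i : Fin k) : EdgeType M := ⟨i, next i, ⟨0, Nat.pos_of_ne_zero (hnext i)⟩⟩
  exact ⟨⟨fun s => Nat.rec e (fun _ e' => step e'.2.1) s, fun s => by cases s <;> rfl⟩, rfl⟩

lemma exists_splice (x y : ShiftSpace M) (t : ℕ) (h : vertex x t = vertex y 0) :
    ∃ z, Agree t z x ∧ vertex z 0 = vertex x 0 ∧ (shiftMap M)^[t] z = y := by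
  induction t generalizing x with
  | zero => exact ⟨y, fun s hs => absurd hs (Nat.not_lt_zero s), h.symm, rfl⟩
  | succ t ih =>
    obtain ⟨z, hzx, hz0, hzy⟩ := ih (shiftMap M x) h
    refine ⟨cons (x.1 0) z (hz0.trans (vertex_succ x 0)).symm, ?_, rfl, hzy⟩
    rintro (_ | s) hs
    exacts [rfl, hzx s (by omega)]

def agreeSetoid (M : Matrix (Fin k) (Fin k) ℕ) (t : ℕ) : Setoid (ShiftSpace M) where
  r := Agree t
  iseqv := ⟨fun _ _ _ => rfl, fun h s hs => (h s hs).symm,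
    fun h h' s hs => (h s hs).trans (h' s hs)⟩

/-- Words of length `t` of `X_M`, as cylinders: points modulo agreement on `t` edges. -/
def Word (M : Matrix (Fin k) (Fin k) ℕ) (t : ℕ) : Type := Quotient (agreeSetoid M t)

namespace Word

variable {t : ℕ}

def mk (t : ℕ) (x : ShiftSpace M) : Word M t := Quotient.mk'' x

lemma mk_eq_mk {x y : ShiftSpace M} : mk t x = mk t y ↔ Agree t x y := Quotient.eq''

lemma mk_surjective : Function.Surjective (mk (M := M) t) := Quotient.mk''_surjective

instance : Finite (Word M t) :=
  Finite.of_injective (Quotient.lift (s := agreeSetoid M t) (fun x (s : Fin t) => x.1 s)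
      fun _ _ h => funext fun s => h s s.2) <| by
    rintro ⟨x⟩ ⟨y⟩ hxy
    exact Quotient.sound fun s hs => congrFun hxy ⟨s, hs⟩

def slice (a : ℕ) {b : ℕ} (h : a + b ≤ t) : Word M t → Word M b :=
  Quotient.map' (shiftMap M)^[a] fun _ _ hxy => (agree_add_iff.1 (hxy.mono h)).2

def src : Word M (t + 1) → Fin k :=
  Quotient.lift (fun x => vertex x 0) fun _ _ h => congrArg Sigma.fst (h 0 t.succ_pos)

def rng : Word M (t + 1) → Fin k :=
  Quotient.lift (fun x => vertex x (t + 1)) fun _ _ h => by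
    rw [vertex_succ, vertex_succ, h t t.lt_succ_self]

@[simp] lemma slice_mk (a : ℕ) {b : ℕ} (h : a + b ≤ t) (x : ShiftSpace M) :
    slice a h (mk t x) = mk b ((shiftMap M)^[a] x) := rfl

@[simp] lemma src_mk (x : ShiftSpace M) : src (mk (t + 1) x) = vertex x 0 := rfl

@[simp] lemma rng_mk (x : ShiftSpace M) : rng (mk (t + 1) x) = vertex x (t + 1) := rfl

end Word

open Word

theorem countMatrix_mul_src_rng {ι : Type*} {a b : ℕ} {f : Word M (a + 1) → ι}
    {s : Word M (a + 1 + (b + 1)) → ι} (hs : ∀ x, s (mk _ x) = f (mk _ x)) :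
    countMatrix f rng * countMatrix (src (M := M) (t := b)) rng = countMatrix s rng := by
  refine countMatrix_mul (slice 0 (by omega)) (slice (a + 1) le_rfl) ?_ ?_ ?_ ?_ ?_
  · intro w
    obtain ⟨x, rfl⟩ := mk_surjective w
    exact (vertex_iterate_shiftMap (a + 1) x 0).symm
  · intro w
    obtain ⟨x, rfl⟩ := mk_surjective w
    exact hs x
  · intro w
    obtain ⟨x, rfl⟩ := mk_surjective w
    exact (vertex_iterate_shiftMap (a + 1) x (b + 1)).symm
  · intro w w'
    obtain ⟨x, rfl⟩ := mk_surjective w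
    obtain ⟨x', rfl⟩ := mk_surjective w'
    simp only [slice_mk, mk_eq_mk, Function.iterate_zero_apply]
    exact fun h₁ h₂ => agree_add_iff.2 ⟨h₁, h₂⟩
  · intro p q hpq
    obtain ⟨x, rfl⟩ := mk_surjective p
    obtain ⟨y, rfl⟩ := mk_surjective q
    obtain ⟨z, hzx, -, hzy⟩ := exists_splice x y (a + 1) hpq
    exact ⟨mk _ z, mk_eq_mk.2 hzx, congrArg (mk _) hzy⟩

lemma countMatrix_src_rng_one (hM : NoZeroRows M) :
    countMatrix (src (M := M) (t := 0)) rng = M := by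
  ext i j
  choose point hpoint using exists_apply_zero_eq hM
  let f (c : Fin (M i j)) : {w : Word M 1 // src w = i ∧ rng w = j} :=
    ⟨mk 1 (point ⟨i, j, c⟩), congrArg Sigma.fst (hpoint _),
      (vertex_succ _ 0).trans (congrArg (·.2.1) (hpoint _))⟩
  refine (Nat.card_eq_of_bijective f ⟨fun c c' hcc' => ?_, ?_⟩).symm.trans (Nat.card_fin _)
  · have := mk_eq_mk.1 (congrArg Subtype.val hcc') 0 one_pos
    have h := (hpoint _).symm.trans (this.trans (hpoint _))
    exact eq_of_heq (Sigma.mk.inj_iff.1 (eq_of_heq (Sigma.mk.inj_iff.1 h).2)).2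
  · rintro ⟨w, hi, hj⟩
    obtain ⟨x, rfl⟩ := mk_surjective w
    obtain ⟨⟨i', j', c⟩, he⟩ : ∃ e, x.1 0 = e := ⟨_, rfl⟩
    have hi' : i' = i := by rw [← hi, src_mk, vertex, he]
    have hj' : j' = j := by rw [← hj, rng_mk, vertex_succ, he]
    subst hi' hj'
    exact ⟨c, Subtype.ext (mk_eq_mk.2 fun s hs => by rw [Nat.lt_one_iff.1 hs, he]; exact hpoint _)⟩

theorem pow_succ_eq_countMatrix (hM : NoZeroRows M) (t : ℕ) :
    M ^ (t + 1) = countMatrix (src (M := M) (t := t)) rng := by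
  induction t with
  | zero => rw [pow_one, countMatrix_src_rng_one hM]
  | succ t ih =>
    rw [pow_succ, ih]
    exact (congrArg (_ * ·) (countMatrix_src_rng_one hM)).symm.trans
      (countMatrix_mul_src_rng fun _ => rfl)

theorem exists_agree_imp_eq {β : Type*} [TopologicalSpace β] [DiscreteTopology β]
    {g : ShiftSpace M → β} (hg : Continuous g) : ∃ N, ∀ x y, Agree N x y → g x = g y := by
  by_contra! H
  let D (N : ℕ) : Set (ShiftSpace M × ShiftSpace M) := {p | Agree N p.1 p.2 ∧ g p.1 ≠ g p.2}
  have hD : ∀ N, IsClosed (D N) := fun N => by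
    have hpre : Continuous fun x : ShiftSpace M => fun s : Fin N => x.1 s :=
      continuous_pi fun s => (continuous_apply _).comp continuous_subtype_val
    have hc : Continuous fun p : ShiftSpace M × ShiftSpace M =>
        (((fun s : Fin N => p.1.1 s), g p.1), ((fun s : Fin N => p.2.1 s), g p.2)) :=
      (((hpre.comp continuous_fst).prodMk (hg.comp continuous_fst))).prodMk
        ((hpre.comp continuous_snd).prodMk (hg.comp continuous_snd))
    convert (isClosed_discrete {q | q.1.1 = q.2.1 ∧ q.1.2 ≠ q.2.2}).preimage hc using 1
    ext p
    simp [D, Agree, funext_iff, Fin.forall_iff]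
  obtain ⟨p, hp⟩ := IsCompact.nonempty_iInter_of_sequence_nonempty_isCompact_isClosed D
    (fun N p hp => ⟨hp.1.mono N.le_succ, hp.2⟩)
    (fun N => let ⟨x, y, hxy⟩ := H N; ⟨(x, y), hxy⟩) (hD 0).isCompact hD
  simp only [Set.mem_iInter] at hp
  have hp₁₂ : p.1 = p.2 := Subtype.ext (funext fun s => (hp (s + 1)).1 s s.lt_succ_self)
  exact (hp 0).2 (congrArg g hp₁₂)

def HasAnticipation (f : ShiftSpace A → ShiftSpace B) (N : ℕ) : Prop :=
  ∀ t x y, Agree (N + t) x y → Agree t (f x) (f y)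

lemma HasAnticipation.mono {f : ShiftSpace A → ShiftSpace B} {N N' : ℕ}
    (hf : HasAnticipation f N) (hN : N ≤ N') : HasAnticipation f N' :=
  fun t x y hxy => hf t x y (hxy.mono (by omega))

theorem exists_hasAnticipation {f : ShiftSpace A → ShiftSpace B} (hf : Continuous f)
    (hσ : Function.Semiconj f (shiftMap A) (shiftMap B)) : ∃ N, HasAnticipation f N := by
  obtain ⟨N, hN⟩ := exists_agree_imp_eq (g := fun x => (f x).1 0)
    ((continuous_apply 0).comp (continuous_subtype_val.comp hf))
  refine ⟨N, fun t x y hxy s hs => ?_⟩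
  have hcoord (z : ShiftSpace A) : (f z).1 s = (f ((shiftMap A)^[s] z)).1 0 := by
    rw [hσ.iterate_right s z, iterate_shiftMap_apply, add_zero]
  rw [hcoord, hcoord]
  exact hN _ _ (agree_add_iff.1 (hxy.mono (by omega) : Agree (s + N) x y)).2

/-- The point that follows `x` for `t` edges and then continues as `σ^[t] x'` has the same
image as `x'`, so it is `x'`. -/
theorem HasAnticipation.agree_of_agree_apply {f : ShiftSpace A → ShiftSpace B} {N t : ℕ}
    (hf : HasAnticipation f N) (hσ : Function.Semiconj f (shiftMap A) (shiftMap B))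
    (hinj : Function.Injective f) {x x' : ShiftSpace A} (happ : Agree t (f x) (f x'))
    (hshift : Agree (N + 1) ((shiftMap A)^[t] x) ((shiftMap A)^[t] x')) : Agree t x x' := by
  obtain ⟨z, hzx, -, hz⟩ := exists_splice x ((shiftMap A)^[t] x') t
    ((vertex_iterate_shiftMap t x 0).symm.trans (congrArg Sigma.fst (hshift 0 N.succ_pos)))
  have hzx' : Agree (t + N) z x :=
    agree_add_iff.2 ⟨hzx, by rw [hz]; exact fun s hs => (hshift s (by omega)).symm⟩
  have hfz : f z = f x' := by
    refine eq_of_agree_of_iterate_eq (t := t)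
      (fun s hs => (hf t z x (hzx'.mono (by omega)) s hs).trans (happ s hs)) ?_
    rw [← (hσ.iterate_right t).eq, ← (hσ.iterate_right t).eq, hz]
  rw [← hinj hfz]
  exact fun s hs => (hzx s hs).symm

namespace Word

def map (f : ShiftSpace A → ShiftSpace B) {N : ℕ} (hf : HasAnticipation f N) (t : ℕ) :
    Word A (N + t) → Word B t :=
  Quotient.map' f (hf t)

@[simp] lemma map_mk (f : ShiftSpace A → ShiftSpace B) {N : ℕ} (hf : HasAnticipation f N)
    (t : ℕ) (x : ShiftSpace A) : map f hf t (mk _ x) = mk t (f x) := rfl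

end Word

section ShiftEquivalence

variable {N : ℕ} {e : ShiftSpace A ≃ ShiftSpace B}

noncomputable def shiftEquivMatrix (e : ShiftSpace A ≃ ShiftSpace B)
    (hN : HasAnticipation e.symm N) : Matrix (Fin n) (Fin m) ℕ :=
  countMatrix (fun w : Word B (N + 1) => src (w.map e.symm hN 1)) rng

variable (hN : HasAnticipation e N) (hN' : HasAnticipation e.symm N)

theorem shiftEquivMatrix_mul_eq_countMatrix (hB : NoZeroRows B) :
    shiftEquivMatrix e hN' * B = countMatrix
      (fun w : Word B (N + 1 + 1) => src ((w.slice 0 (by omega)).map e.symm hN' 1)) rng :=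
  (congrArg (_ * ·) (countMatrix_src_rng_one hB)).symm.trans
    (countMatrix_mul_src_rng fun _ => rfl)

theorem mul_shiftEquivMatrix_eq_countMatrix (hA : NoZeroRows A)
    (he : Function.Semiconj e (shiftMap A) (shiftMap B)) :
    A * shiftEquivMatrix e hN' = countMatrix
      (fun w : Word B (N + 1 + 1) => src ((w.slice 0 (by omega)).map e.symm hN' 1)) rng := by
  have he' : Function.Semiconj e.symm (shiftMap B) (shiftMap A) :=
    he.inverse_left e.left_inv e.right_inv
  refine (congrArg (· * _) (countMatrix_src_rng_one hA)).symm.trans ?_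
  refine countMatrix_mul (fun w => (w.slice 0 (by omega)).map e.symm hN' 1)
    (slice 1 (by omega)) ?_ (fun _ => rfl) ?_ ?_ ?_
  · intro w
    obtain ⟨z, rfl⟩ := mk_surjective w
    show vertex (e.symm z) 1 = vertex (e.symm (shiftMap B z)) 0
    rw [he'.eq]
    rfl
  · intro w
    obtain ⟨z, rfl⟩ := mk_surjective w
    rfl
  · intro w w'
    obtain ⟨z, rfl⟩ := mk_surjective w
    obtain ⟨z', rfl⟩ := mk_surjective w'
    simp only [slice_mk, map_mk, mk_eq_mk, Function.iterate_zero_apply]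
    intro happ hshift
    have h₁ := hN'.agree_of_agree_apply he' e.symm.injective (t := 1) happ hshift
    exact fun s hs => agree_add_iff.2 ⟨h₁, hshift⟩ s (by omega)
  · intro p q hpq
    obtain ⟨y, rfl⟩ := mk_surjective p
    obtain ⟨z, rfl⟩ := mk_surjective q
    obtain ⟨ξ, hξy, -, hξz⟩ := exists_splice y (e.symm z) 1 hpq
    refine ⟨mk _ (e ξ), ?_, ?_⟩
    · show mk 1 (e.symm (e ξ)) = mk 1 y
      rw [e.symm_apply_apply]
      exact mk_eq_mk.2 hξy
    · show mk (N + 1) (shiftMap B (e ξ)) = mk (N + 1) z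
      rw [← he.eq, show shiftMap A ξ = e.symm z from hξz, e.apply_symm_apply]

theorem mul_shiftEquivMatrix (hA : NoZeroRows A) (hB : NoZeroRows B)
    (he : Function.Semiconj e (shiftMap A) (shiftMap B)) :
    A * shiftEquivMatrix e hN' = shiftEquivMatrix e hN' * B := by
  rw [mul_shiftEquivMatrix_eq_countMatrix hN' hA he, shiftEquivMatrix_mul_eq_countMatrix hN' hB]

theorem pow_eq_shiftEquivMatrix_mul (hA : NoZeroRows A)
    (he : Function.Semiconj e (shiftMap A) (shiftMap B)) :
    A ^ (N + 1 + (N + 1)) = shiftEquivMatrix e hN' * shiftEquivMatrix e.symm hN := by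
  have he' : Function.Semiconj e.symm (shiftMap B) (shiftMap A) :=
    he.inverse_left e.left_inv e.right_inv
  rw [show N + 1 + (N + 1) = N + 1 + N + 1 by omega, pow_succ_eq_countMatrix hA]
  symm
  refine countMatrix_mul (fun w => (w.slice 0 (by omega)).map e hN (N + 1))
    (slice (N + 1) (by omega)) ?_ ?_ ?_ ?_ ?_
  · intro w
    obtain ⟨x, rfl⟩ := mk_surjective w
    show vertex (e x) (N + 1) = vertex (e ((shiftMap A)^[N + 1] x)) 0
    rw [(he.iterate_right _).eq, vertex_iterate_shiftMap]
  · intro w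
    obtain ⟨x, rfl⟩ := mk_surjective w
    show vertex x 0 = vertex (e.symm (e x)) 0
    rw [e.symm_apply_apply]
  · intro w
    obtain ⟨x, rfl⟩ := mk_surjective w
    exact (vertex_iterate_shiftMap (N + 1) x (N + 1)).symm
  · intro w w'
    obtain ⟨x, rfl⟩ := mk_surjective w
    obtain ⟨x', rfl⟩ := mk_surjective w'
    simp only [slice_mk, map_mk, mk_eq_mk, Function.iterate_zero_apply]
    intro happ hshift
    exact (agree_add_iff (a := N + 1) (b := N + 1)).2
      ⟨hN.agree_of_agree_apply he e.injective happ hshift, hshift⟩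
  · intro p q hpq
    obtain ⟨z, rfl⟩ := mk_surjective p
    obtain ⟨y, rfl⟩ := mk_surjective q
    obtain ⟨ζ, hζz, -, hζy⟩ := exists_splice z (e y) (N + 1) hpq
    refine ⟨mk _ (e.symm ζ), ?_, ?_⟩
    · simpa [mk_eq_mk] using hζz
    · simp only [slice_mk, ← (he'.iterate_right _).eq, hζy, e.symm_apply_apply]

end ShiftEquivalence

end ShiftSpace

/-- **Statement 12.** If the one-sided edge shifts of `A` and `B` (no zero rows) are
one-sided conjugate, then `A` and `B` are unitally shift equivalent. -/
theorem oneSidedConjugacy_implies_unitallyShiftEquivalent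
    {n m : ℕ} (A : Matrix (Fin n) (Fin n) ℕ) (B : Matrix (Fin m) (Fin m) ℕ)
    (hA : NoZeroRows A) (hB : NoZeroRows B)
    (h : ∃ h : ShiftSpace A ≃ₜ ShiftSpace B,
      ∀ x : ShiftSpace A, h (shiftMap A x) = shiftMap B (h x)) :
    UnitallyShiftEquivalent A B := by
  obtain ⟨h, hσ⟩ := h
  have hσ : Function.Semiconj h (shiftMap A) (shiftMap B) := hσ
  have hσ' : Function.Semiconj h.symm (shiftMap B) (shiftMap A) :=
    hσ.inverse_left h.left_inv h.right_inv
  obtain ⟨N₁, hN₁⟩ := ShiftSpace.exists_hasAnticipation h.continuous hσ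
  obtain ⟨N₂, hN₂⟩ := ShiftSpace.exists_hasAnticipation h.symm.continuous hσ'
  have hN : ShiftSpace.HasAnticipation h.toEquiv (max N₁ N₂) := hN₁.mono (le_max_left _ _)
  have hN' : ShiftSpace.HasAnticipation h.toEquiv.symm (max N₁ N₂) :=
    hN₂.mono (le_max_right _ _)
  refine ⟨_, _, _, ⟨by omega, ShiftSpace.pow_eq_shiftEquivMatrix_mul hN hN' hA hσ,
    ShiftSpace.pow_eq_shiftEquivMatrix_mul (e := h.toEquiv.symm) hN' hN hB hσ',
    ShiftSpace.mul_shiftEquivMatrix hN' hA hB hσ,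
    ShiftSpace.mul_shiftEquivMatrix (e := h.toEquiv.symm) hN hB hA hσ'⟩,
    0, max N₁ N₂ + 1, ?_⟩
  rw [pow_zero, one_mulVec, zero_add, ← transpose_pow, ShiftSpace.pow_succ_eq_countMatrix hB,
    ShiftSpace.shiftEquivMatrix, countMatrix_transpose_mulVec_one,
    countMatrix_transpose_mulVec_one]
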